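/- arXiv:2412.09683 — 3 statements merged into one kernel-verified Lean document; each statement's English description precedes it below -/
import Mathlib

section
/- Let κ be a limit ordinal, let Δ ⊆ κ be a discrete set of ordinals, let U be an ultrafilter on κ, and let f : κ → κ be a function with f(α) ∈ Δ for every α < κ that is unbounded modulo U. Then the function g : κ → κ defined by g(α) = sup(Δ ∩ f(α)) satisfies g(α) < f(α) for every α < κ, and g is unbounded modulo U. (This expresses combinatorially that for a κ-complete ultrafilter U on κ, the ordinal κ does not belong to the image of Δ under the ultrapower embedding.) -/
/-- The set of ordinals below `o`, as a type. -/
abbrev Below (o : Ordinal.{0}) : Type 1 := {α : Ordinal.{0} // α < o}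

/-- A set of ordinals is *discrete* if for every `α ∈ Δ`, `sup (Δ ∩ α) < α`. -/
def IsDiscreteOrdSet (Δ : Set Ordinal.{0}) : Prop :=
  ∀ α ∈ Δ, sSup (Δ ∩ Set.Iio α) < α

theorem le_csSup_inter_Iio {α : Type*} [ConditionallyCompleteLattice α] {s : Set α} {a b : α}
    (ha : a ∈ s) (hab : a < b) : a ≤ sSup (s ∩ Set.Iio b) :=
  le_csSup (bddAbove_Iio.mono Set.inter_subset_right) ⟨ha, hab⟩

theorem regressive_below_discrete_unbounded_general (κ : Ordinal.{0})
    (Δ : Set Ordinal.{0}) (hdisc : IsDiscreteOrdSet Δ)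
    (U : Ultrafilter (Below κ))
    (f : Below κ → Below κ) (hf : ∀ α : Below κ, (f α : Ordinal) ∈ Δ)
    (hunb : ∀ β : Ordinal.{0}, β < κ → {α : Below κ | β < (f α : Ordinal)} ∈ U) :
    (∀ α : Below κ, sSup (Δ ∩ Set.Iio (f α : Ordinal)) < (f α : Ordinal)) ∧
    (∀ β : Ordinal.{0}, β < κ →
      {α : Below κ | β < sSup (Δ ∩ Set.Iio (f α : Ordinal))} ∈ U) := by
  refine ⟨fun α => hdisc _ (hf α), fun β hβ => ?_⟩
  -- The value `f α₀ > β` lies in `Δ`, so it bounds `g` from below wherever `f > f α₀`.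
  obtain ⟨α₀, hα₀⟩ := U.nonempty_of_mem (hunb β hβ)
  filter_upwards [hunb _ (f α₀).2] with α hα
  exact hα₀.trans_le (le_csSup_inter_Iio (hf α₀) hα)

/-- Suppose `κ` is a limit ordinal, `Δ ⊆ κ` is discrete, `U` is an ultrafilter on `κ`,
and `f : κ → κ` takes values in `Δ` and is unbounded modulo `U`. Then
`g(α) = sup (Δ ∩ f(α))` satisfies `g(α) < f(α)` for every `α`, and `g` is unbounded
modulo `U`. -/
theorem regressive_below_discrete_unbounded (κ : Ordinal.{0}) (hκ : Order.IsSuccLimit κ)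
    (Δ : Set Ordinal.{0}) (hΔ : Δ ⊆ Set.Iio κ) (hdisc : IsDiscreteOrdSet Δ)
    (U : Ultrafilter (Below κ))
    (f : Below κ → Below κ) (hf : ∀ α : Below κ, (f α : Ordinal) ∈ Δ)
    (hunb : ∀ β : Ordinal.{0}, β < κ → {α : Below κ | β < (f α : Ordinal)} ∈ U) :
    (∀ α : Below κ, sSup (Δ ∩ Set.Iio (f α : Ordinal)) < (f α : Ordinal)) ∧
    (∀ β : Ordinal.{0}, β < κ →
      {α : Below κ | β < sSup (Δ ∩ Set.Iio (f α : Ordinal))} ∈ U) :=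
  regressive_below_discrete_unbounded_general κ Δ hdisc U f hf hunb
end

section
/- Let κ be a regular uncountable cardinal, let D be a normal ultrafilter on κ, let δ : κ → κ be a function with α < δ(α) for all α < κ, and for each α < κ let U_α be a δ(α)-complete ultrafilter on κ. Let W = ∑_D U_α. Then W is normal with respect to the first coordinate: for every function h : κ × κ → κ such that {(α, β) : h(α, β) < α} ∈ W, there exists γ < κ such that {(α, β) : h(α, β) = γ} ∈ W. -/
/-- `D` is closed under intersections of families indexed by ordinals below `o`
(for `o` the initial ordinal of a cardinal `κ`, this says `D` is `κ`-complete). -/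
def IsOrdComplete (o : Ordinal.{0}) {X : Type*} (D : Ultrafilter X) : Prop :=
  ∀ γ : Ordinal.{0}, γ < o → ∀ A : Below γ → Set X, (∀ i, A i ∈ D) → (⋂ i, A i) ∈ D

/-- An ultrafilter is nonprincipal if the complement of every singleton belongs to it. -/
def Nonprincipal {X : Type*} (D : Ultrafilter X) : Prop := ∀ a : X, {x | x ≠ a} ∈ D

/-- `D` is a normal ultrafilter on the regular uncountable cardinal `κ`:
nonprincipal, `κ`-complete, and every function regressive on a set in `D` is
constant on a set in `D`. -/
def IsNormal (κ : Cardinal.{0}) (D : Ultrafilter (Below κ.ord)) : Prop :=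
  Nonprincipal D ∧ IsOrdComplete κ.ord D ∧
    ∀ f : Below κ.ord → Below κ.ord,
      {α : Below κ.ord | (f α : Ordinal) < (α : Ordinal)} ∈ D →
      ∃ γ : Below κ.ord, {α : Below κ.ord | f α = γ} ∈ D

/-- The sum `∑_D U_α`: the collection of all `A ⊆ X × X` such that
`{α : {β : (α, β) ∈ A} ∈ U_α} ∈ D`. -/
def USum {X : Type*} (D : Ultrafilter X) (U : X → Ultrafilter X) : Set (Set (X × X)) :=
  {A | {α | {β | (α, β) ∈ A} ∈ U α} ∈ D}

/-- If `D` is normal on the regular uncountable `κ`, `δ : κ → κ` satisfies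
`α < δ(α)`, and each `U_α` is a `δ(α)`-complete ultrafilter on `κ`, then the sum
`W = ∑_D U_α` is normal with respect to the first coordinate: every
`h : κ × κ → κ` with `{(α, β) : h(α, β) < α} ∈ W` is constant on a set in `W`. -/
theorem sum_normal_first_coordinate (κ : Cardinal.{0}) (hreg : κ.IsRegular)
    (hunc : Cardinal.aleph0 < κ)
    (D : Ultrafilter (Below κ.ord)) (hD : IsNormal κ D)
    (δ : Below κ.ord → Below κ.ord) (hδ : ∀ α : Below κ.ord, (α : Ordinal) < (δ α : Ordinal))
    (U : Below κ.ord → Ultrafilter (Below κ.ord))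
    (hU : ∀ α : Below κ.ord, IsOrdComplete (δ α : Ordinal) (U α))
    (h : Below κ.ord × Below κ.ord → Below κ.ord)
    (hh : {x : Below κ.ord × Below κ.ord | (h x : Ordinal) < (x.1 : Ordinal)} ∈ USum D U) :
    ∃ γ : Below κ.ord,
      {x : Below κ.ord × Below κ.ord | h x = γ} ∈ USum D U := by
  classical
  set S : Set (Below κ.ord) :=
    {α | {β | (h (α, β) : Ordinal) < (α : Ordinal)} ∈ U α} with hS
  have hSD : S ∈ D := hh
  have key : ∀ α ∈ S, ∃ γ : Below κ.ord,
      (γ : Ordinal) < (α : Ordinal) ∧ {β | h (α, β) = γ} ∈ U α := by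
    intro α hα
    by_contra hcon
    push_neg at hcon
    set A : Below (α : Ordinal) → Set (Below κ.ord) :=
      fun i => {β | h (α, β) ≠ ⟨i.1, i.2.trans α.2⟩} with hA
    have hAmem : ∀ i, A i ∈ U α := by
      intro i
      have h1 := hcon ⟨i.1, i.2.trans α.2⟩ i.2
      rw [← Ultrafilter.compl_mem_iff_notMem] at h1
      exact h1
    have hInt : (⋂ i, A i) ∈ U α := hU α (α : Ordinal) (hδ α) A hAmem
    obtain ⟨β, hβ1, hβ2⟩ :=
      Ultrafilter.nonempty_of_mem ((U α).inter_mem hInt hα)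
    have hmem : β ∈ A ⟨(h (α, β) : Ordinal), hβ2⟩ := Set.mem_iInter.mp hβ1 _
    exact hmem rfl
  let f : Below κ.ord → Below κ.ord := fun α =>
    if hα : ∃ γ : Below κ.ord,
        (γ : Ordinal) < (α : Ordinal) ∧ {β | h (α, β) = γ} ∈ U α
    then Classical.choose hα else α
  have hf : ∀ α ∈ S, (f α : Ordinal) < (α : Ordinal) ∧ {β | h (α, β) = f α} ∈ U α := by
    intro α hα
    have hex := key α hα
    simp only [f, dif_pos hex]
    exact Classical.choose_spec hex
  have hreg' : {α : Below κ.ord | (f α : Ordinal) < (α : Ordinal)} ∈ D :=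
    Filter.mem_of_superset hSD (fun α hα => (hf α hα).1)
  obtain ⟨γ, hγ⟩ := hD.2.2 f hreg'
  refine ⟨γ, ?_⟩
  have hint : S ∩ {α | f α = γ} ∈ D := (Filter.inter_mem hSD hγ : S ∩ {α | f α = γ} ∈ (D : Filter _))
  show {α | {β | h (α, β) = γ} ∈ U α} ∈ D
  refine Filter.mem_of_superset hint ?_
  rintro α ⟨hα1, hα2⟩
  have h2 := (hf α hα1).2
  simpa [show f α = γ from hα2] using h2
end

section
/- Let κ be a regular uncountable cardinal and let D be a normal ultrafilter on κ. Then for every function f : κ → κ, either there exists γ < κ such that {α < κ : f(α) = γ} ∈ D, or there exists B ∈ D such that f restricted to B is injective. Consequently, if the pushforward ultrafilter f_*(D) = {X ⊆ κ : f⁻¹(X) ∈ D} is nonprincipal, then f is injective on a set in D, and hence f_*(D) is Rudin–Keisler equivalent to D. -/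
/-- Two ultrafilters are Rudin–Keisler equivalent if each is the pushforward of the
other under some function. -/
def RKEquiv {X : Type*} (V W : Ultrafilter X) : Prop :=
  (∃ g : X → X, Ultrafilter.map g V = W) ∧ (∃ g : X → X, Ultrafilter.map g W = V)

/-!
Normality is Fodor's pressing-down property, and it makes `D` closed under diagonal
intersections: if `x ∉ A y` for some `y < x` on a set in `D`, choosing such a `y` gives a
regressive function, constant with value `y₀` on a set in `D`, which then misses `A y₀`.
If `f` is constant on no set in `D`, the sets `{x | f x ≠ f y}` all lie in `D`, and on their
diagonal intersection `f` is injective. An inverse of `f` on that set pulls `f_*(D)` back to `D`.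
-/

open Filter Set

variable {X Y : Type*}

def PressingDown [LT X] (D : Ultrafilter X) : Prop :=
  ∀ g : X → X, {x | g x < x} ∈ D → ∃ y, {x | g x = y} ∈ D

theorem IsNormal.pressingDown {κ : Cardinal.{0}} {D : Ultrafilter (Below κ.ord)}
    (hD : IsNormal κ D) : PressingDown D :=
  hD.2.2

namespace PressingDown

theorem diagInter_mem [LT X] {D : Ultrafilter X} (hD : PressingDown D) {A : X → Set X}
    (hA : ∀ y, A y ∈ D) : {x | ∀ y < x, x ∈ A y} ∈ D := by
  by_contra h
  have hS : {x | ∃ y < x, x ∉ A y} ∈ D := by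
    rw [← Ultrafilter.compl_mem_iff_notMem] at h
    simpa only [compl_ofPred, not_forall, exists_prop] using h
  obtain ⟨x₀, -⟩ := D.nonempty_of_mem hS
  have : Nonempty X := ⟨x₀⟩
  choose! g hg_lt hg_notMem using fun x (hx : x ∈ {x | ∃ y < x, x ∉ A y}) => hx
  obtain ⟨y, hy⟩ := hD g (mem_of_superset hS hg_lt)
  obtain ⟨x, ⟨hxy, hxS⟩, hxA⟩ := D.nonempty_of_mem (inter_mem (inter_mem hy hS) (hA y))
  exact hg_notMem x hxS (hxy ▸ hxA)

theorem exists_const_or_injOn [LinearOrder X] {D : Ultrafilter X} (hD : PressingDown D)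
    (f : X → Y) : (∃ y, {x | f x = y} ∈ D) ∨ ∃ B ∈ D, InjOn f B := by
  refine or_iff_not_imp_left.2 fun hconst => ?_
  have hfiber : ∀ y, {x | f x ≠ f y} ∈ D := fun y =>
    Ultrafilter.compl_mem_iff_notMem.2 fun h => hconst ⟨f y, h⟩
  refine ⟨_, hD.diagInter_mem hfiber, fun a ha b hb hab => ?_⟩
  rcases lt_trichotomy a b with h | rfl | h
  · exact absurd hab.symm (hb a h)
  · rfl
  · exact absurd hab (ha b h)

end PressingDown

theorem nonprincipal_map_iff {D : Ultrafilter X} {f : X → Y} :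
    Nonprincipal (D.map f) ↔ ∀ y, {x | f x = y} ∉ D := by
  simp only [Nonprincipal, ← Ultrafilter.compl_mem_iff_notMem]
  rfl

theorem rkEquiv_map_of_injOn {D : Ultrafilter X} {f : X → X} {B : Set X} (hB : B ∈ D)
    (hf : InjOn f B) : RKEquiv (D.map f) D := by
  obtain ⟨x, -⟩ := D.nonempty_of_mem hB
  have : Nonempty X := ⟨x⟩
  refine ⟨⟨Function.invFunOn f B, Ultrafilter.coe_injective ?_⟩, ⟨f, rfl⟩⟩
  rw [Ultrafilter.coe_map, Ultrafilter.coe_map, Filter.map_map]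
  exact (Filter.map_congr (eventuallyEq_of_mem hB hf.leftInvOn_invFunOn)).trans Filter.map_id

theorem normal_constant_or_injective_general (κ : Cardinal.{0})
    (D : Ultrafilter (Below κ.ord)) (hD : IsNormal κ D)
    (f : Below κ.ord → Below κ.ord) :
    ((∃ γ : Below κ.ord, {α : Below κ.ord | f α = γ} ∈ D) ∨
      (∃ B ∈ D, Set.InjOn f B)) ∧
    (Nonprincipal (Ultrafilter.map f D) →
      (∃ B ∈ D, Set.InjOn f B) ∧ RKEquiv (Ultrafilter.map f D) D) := by
  have key := hD.pressingDown.exists_const_or_injOn f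
  refine ⟨key, fun hmap => ?_⟩
  obtain ⟨B, hB, hf⟩ := key.resolve_left fun ⟨γ, hγ⟩ => nonprincipal_map_iff.1 hmap γ hγ
  exact ⟨⟨B, hB, hf⟩, rkEquiv_map_of_injOn hB hf⟩

/-- For a normal ultrafilter `D` on a regular uncountable cardinal `κ` and any
`f : κ → κ`, either `f` is constant on a set in `D` or `f` is injective on a set in
`D`. Consequently, if the pushforward `f_*(D)` is nonprincipal, then `f` is injective
on a set in `D` and `f_*(D)` is Rudin–Keisler equivalent to `D`. -/
theorem normal_constant_or_injective (κ : Cardinal.{0}) (hreg : κ.IsRegular)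
    (hunc : Cardinal.aleph0 < κ)
    (D : Ultrafilter (Below κ.ord)) (hD : IsNormal κ D)
    (f : Below κ.ord → Below κ.ord) :
    ((∃ γ : Below κ.ord, {α : Below κ.ord | f α = γ} ∈ D) ∨
      (∃ B ∈ D, Set.InjOn f B)) ∧
    (Nonprincipal (Ultrafilter.map f D) →
      (∃ B ∈ D, Set.InjOn f B) ∧ RKEquiv (Ultrafilter.map f D) D) :=
  normal_constant_or_injective_general κ D hD f
end
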